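/- Let r₁, r₂ be positive integers and E₁, E₂ vector bundles with dᵢ = c₁(det Eᵢ) satisfying r₂·d₁ = r₁·d₂ in Pic, i.e. (det E₁)^{⊗r₂} ≅ (det E₂)^{⊗r₁}. Setting λ = r₂·d₁, the det(Eᵢ)-twisted connection of weight 1/rᵢ on each Eᵢ, which is equivalent to a λ-twisted connection of weight 1/(r₁r₂), yields a single λ-twisted connection of weight 1/(r₁r₂) on E₁ ⊕ E₂. In particular, two flat projective connections on E₁ and E₂ combine canonically to a flat projective connection on E₁ ⊕ E₂ restricting to the given ones on each summand. -/
import Mathlib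


/-- Proposition 4.2(i), in an abstract model.  `T` is the Lie algebra of vector fields on the
base, `E₁, E₂` are the (modules of sections of the) two bundles, of ranks `r₁, r₂`, with
determinant classes `d₁, d₂` in the Picard group `P`, and `chern` assigns (additively) to a
Picard class the scalar curvature 2-cocycle of the associated twisted algebroid.  A flat
projective connection on `Eᵢ` is given by a lift `∇ᵢ` whose curvature is the scalar cocycle
`(1/rᵢ)·chern(dᵢ)` (the `det(Eᵢ)`-twisted connection of weight `1/rᵢ` of Lemma 2.1).
If `r₂·d₁ = r₁·d₂` in `P` (i.e. `(det E₁)^{⊗r₂} ≅ (det E₂)^{⊗r₁}`), then with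
`λ = r₂·d₁` the block-diagonal direct sum `∇₁ ⊕ ∇₂` on `E₁ ⊕ E₂` is again projectively
flat, with scalar curvature the `λ`-cocycle of weight `1/(r₁r₂)`; it preserves each summand
and restricts to the given connections. -/
theorem stmt_14 (T : Type) [LieRing T]
    (E₁ E₂ : Type) [AddCommGroup E₁] [Module ℂ E₁] [AddCommGroup E₂] [Module ℂ E₂]
    (r₁ r₂ : ℕ) (hr₁ : 0 < r₁) (hr₂ : 0 < r₂)
    (P : Type) [AddCommGroup P] (d₁ d₂ : P)
    (hd : r₂ • d₁ = r₁ • d₂)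
    (chern : P →+ (T → T → ℂ))
    (nabla₁ : T → Module.End ℂ E₁) (nabla₂ : T → Module.End ℂ E₂)
    (h₁ : ∀ D D' : T, ⁅nabla₁ D, nabla₁ D'⁆ - nabla₁ ⁅D, D'⁆
        = ((r₁ : ℂ)⁻¹ * chern d₁ D D') • (1 : Module.End ℂ E₁))
    (h₂ : ∀ D D' : T, ⁅nabla₂ D, nabla₂ D'⁆ - nabla₂ ⁅D, D'⁆
        = ((r₂ : ℂ)⁻¹ * chern d₂ D D') • (1 : Module.End ℂ E₂)) :
    (∀ D D' : T,
      ⁅(nabla₁ D).prodMap (nabla₂ D), (nabla₁ D').prodMap (nabla₂ D')⁆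
          - (nabla₁ ⁅D, D'⁆).prodMap (nabla₂ ⁅D, D'⁆)
        = (((r₁ : ℂ) * (r₂ : ℂ))⁻¹ * chern (r₂ • d₁) D D') • (1 : Module.End ℂ (E₁ × E₂))) ∧
    (∀ (D : T) (x : E₁), (nabla₁ D).prodMap (nabla₂ D) (x, 0) = (nabla₁ D x, 0)) ∧
    (∀ (D : T) (y : E₂), (nabla₁ D).prodMap (nabla₂ D) (0, y) = (0, nabla₂ D y)) := by
  have hr1 : (r₁ : ℂ) ≠ 0 := Nat.cast_ne_zero.mpr hr₁.ne'
  have hr2 : (r₂ : ℂ) ≠ 0 := Nat.cast_ne_zero.mpr hr₂.ne'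
  refine ⟨?_, ?_, ?_⟩
  · intro D D'
    have key1 : ((r₁ : ℂ) * (r₂ : ℂ))⁻¹ * chern (r₂ • d₁) D D'
        = (r₁ : ℂ)⁻¹ * chern d₁ D D' := by
      have : chern (r₂ • d₁) D D' = (r₂ : ℂ) * chern d₁ D D' := by
        rw [map_nsmul]
        simp [nsmul_eq_mul]
      rw [this, mul_inv]
      field_simp
    have key2 : ((r₁ : ℂ) * (r₂ : ℂ))⁻¹ * chern (r₂ • d₁) D D'
        = (r₂ : ℂ)⁻¹ * chern d₂ D D' := by
      have : chern (r₂ • d₁) D D' = (r₁ : ℂ) * chern d₂ D D' := by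
        rw [hd, map_nsmul]
        simp [nsmul_eq_mul]
      rw [this, mul_inv]
      field_simp
    apply LinearMap.ext
    rintro ⟨x, y⟩
    have e1 := LinearMap.ext_iff.mp (h₁ D D') x
    have e2 := LinearMap.ext_iff.mp (h₂ D D') y
    simp only [Ring.lie_def, LinearMap.sub_apply, Module.End.mul_apply,
      LinearMap.smul_apply, Module.End.one_apply, LinearMap.prodMap_apply,
      Prod.mk_sub_mk, Prod.smul_mk, Prod.mk.injEq] at e1 e2 ⊢
    exact ⟨by rw [key1]; exact e1, by rw [key2]; exact e2⟩
  · intro D x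
    simp
  · intro D y
    simp
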